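/- For any positive integers N and k, ∑_{1≤m<N} ((-1)^{m-1}/m^k)·binom(N-1,m) = ∑_{0<m_1≤⋯≤m_k<N} 1/(m_1⋯m_k). (Hoffman's duality for the depth-one index (k): H_{<N}(k) = ζ^⋆_{<N}(1,…,1) with k ones.) -/

import Mathlib

/-- Auxiliary recursion: `zetaStarAux M t` sums over `0 < m₁ ≤ ⋯ ≤ m_r < M` where the
exponent list `t` lists the exponents from the *largest* variable downwards. -/
def zetaStarAux : ℕ → List ℕ → ℚ
  | _, [] => 1
  | M, k :: t => ∑ m ∈ Finset.Ioo 0 M, (1 / (m : ℚ) ^ k) * zetaStarAux (m + 1) t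

/-- The multiple star harmonic sum `ζ⋆_{<N}(k₁,…,k_r) = ∑_{0<m₁≤⋯≤m_r<N} ∏ᵢ 1/mᵢ^{kᵢ}`. -/
def zetaStar (N : ℕ) (ks : List ℕ) : ℚ := zetaStarAux N ks.reverse

/-!
Write `S(n, k) = ∑_{1 ≤ m ≤ n} (-1)^(m-1) binom(n, m) / m^k`. Pascal's rule together with
`m · binom(n+1, m) = (n+1) · binom(n, m-1)` gives `S(n+1, k+1) = S(n, k+1) + S(n+1, k)/(n+1)`,
and `S(n, 0) = 1` for `n > 0` is the vanishing of the alternating binomial sum.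
Splitting off the largest variable `m_k = n + 1` shows that the star sums
`ζ⋆_{<n+1}(1,…,1)` obey the same recursion with the same initial values.
-/

open Finset

/-- `S(n, k)`, with the summation index shifted down by one. -/
def altBinomSum (n k : ℕ) : ℚ :=
  ∑ m ∈ range n, (-1 : ℚ) ^ m / ((m : ℚ) + 1) ^ k * (n.choose (m + 1) : ℚ)

theorem altBinomSum_eq_sum_Ioo (n k : ℕ) :
    altBinomSum n k = ∑ m ∈ Ioo 0 (n + 1), (-1 : ℚ) ^ (m - 1) / (m : ℚ) ^ k * (n.choose m : ℚ) := by
  rw [← Ico_add_one_left_eq_Ioo, sum_Ico_eq_sum_range, altBinomSum]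
  simp [add_comm]

theorem altBinomSum_succ_zero (n : ℕ) : altBinomSum (n + 1) 0 = 1 := by
  have h := Int.alternating_sum_range_choose_of_ne (n := n + 1) n.succ_ne_zero
  rw [sum_range_succ'] at h
  have hq := congrArg (Int.cast : ℤ → ℚ) h
  push_cast at hq
  simp only [pow_succ, mul_neg_one, neg_mul, sum_neg_distrib, Nat.choose_zero_right,
    Nat.cast_one, one_mul] at hq
  simp only [altBinomSum, pow_zero, div_one]
  linarith

theorem altBinomSum_succ_succ (n k : ℕ) :
    altBinomSum (n + 1) (k + 1) = altBinomSum n (k + 1) + altBinomSum (n + 1) k / (n + 1) := by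
  have term (m : ℕ) : (-1 : ℚ) ^ m / ((m : ℚ) + 1) ^ (k + 1) * ((n + 1).choose (m + 1) : ℚ)
      = (-1 : ℚ) ^ m / ((m : ℚ) + 1) ^ (k + 1) * (n.choose (m + 1) : ℚ)
        + (-1 : ℚ) ^ m / ((m : ℚ) + 1) ^ k * ((n + 1).choose (m + 1) : ℚ) / (n + 1) := by
    have pascal : ((n + 1).choose (m + 1) : ℚ) = n.choose m + n.choose (m + 1) := by
      exact_mod_cast Nat.choose_succ_succ' n m
    have absorb : (n.choose m : ℚ) = (n + 1).choose (m + 1) * ((m : ℚ) + 1) / (n + 1) := by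
      rw [eq_div_iff (by positivity)]
      exact_mod_cast (mul_comm _ _).trans (Nat.add_one_mul_choose_eq n m)
    calc _ = (-1 : ℚ) ^ m / ((m : ℚ) + 1) ^ (k + 1) * (n.choose (m + 1) : ℚ)
          + (-1 : ℚ) ^ m / ((m : ℚ) + 1) ^ (k + 1) * (n.choose m : ℚ) := by rw [pascal]; ring
      _ = _ := by rw [absorb, pow_succ]; field_simp
  rw [altBinomSum, sum_congr rfl fun m _ => term m, sum_add_distrib, ← sum_div, sum_range_succ,
    Nat.choose_succ_self]
  simp [altBinomSum]

theorem zetaStarAux_cons_of_pos {M : ℕ} (hM : 0 < M) (k : ℕ) (t : List ℕ) :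
    zetaStarAux (M + 1) (k :: t) =
      zetaStarAux M (k :: t) + 1 / (M : ℚ) ^ k * zetaStarAux (M + 1) t := by
  rw [zetaStarAux, zetaStarAux, Ioo_add_one_right_eq_Ioc, ← Ioo_insert_right hM,
    sum_insert (by simp), add_comm]

theorem altBinomSum_eq_zetaStarAux (n k : ℕ) :
    altBinomSum n (k + 1) = zetaStarAux (n + 1) (List.replicate (k + 1) 1) := by
  induction n generalizing k with
  | zero => simp [altBinomSum, List.replicate_succ, zetaStarAux, ← Ico_add_one_left_eq_Ioo]
  | succ n ihn =>
    induction k with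
    | zero =>
      rw [altBinomSum_succ_succ, ihn, altBinomSum_succ_zero, List.replicate_succ,
        zetaStarAux_cons_of_pos n.succ_pos]
      simp [zetaStarAux]
    | succ k ihk =>
      rw [altBinomSum_succ_succ, ihn, ihk, List.replicate_succ,
        zetaStarAux_cons_of_pos n.succ_pos]
      push_cast
      ring

theorem hoffman_duality_depth_one_general (N k : ℕ) (hk : 0 < k) :
    ∑ m ∈ Finset.Ioo 0 N, ((-1 : ℚ) ^ (m - 1) / (m : ℚ) ^ k) * ((N - 1).choose m : ℚ) =
      zetaStar N (List.replicate k 1) := by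
  obtain ⟨k, rfl⟩ := Nat.exists_eq_add_one_of_ne_zero hk.ne'
  rw [zetaStar, List.reverse_replicate]
  cases N with
  | zero => simp [List.replicate_succ, zetaStarAux]
  | succ n => rw [Nat.add_sub_cancel, ← altBinomSum_eq_sum_Ioo, altBinomSum_eq_zetaStarAux]

/-- Hoffman's duality for the depth-one index `(k)`:
`∑_{1≤m<N} ((-1)^{m-1}/m^k)·binom(N-1,m) = ∑_{0<m₁≤⋯≤m_k<N} 1/(m₁⋯m_k)`. -/
theorem hoffman_duality_depth_one (N k : ℕ) (hN : 0 < N) (hk : 0 < k) :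
    ∑ m ∈ Finset.Ioo 0 N, ((-1 : ℚ) ^ (m - 1) / (m : ℚ) ^ k) * ((N - 1).choose m : ℚ) =
      zetaStar N (List.replicate k 1) :=
  hoffman_duality_depth_one_general N k hk
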